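/- Let γ be a simple closed analytic strictly convex curve with 0 in its interior, let P(X) = dY_γ(X)(s(X)) with s(x,y) = (x,−y), and for L ∈ GL₂(ℝ) define g_L(δ) = P(L(1,δ)). Then g_L is real analytic and is not equal to any polynomial. -/

import Mathlib

open Matrix Real

/-- The Euclidean plane. -/
abbrev E2 := EuclideanSpace ℝ (Fin 2)

/-- The vector `(a, b)` of the Euclidean plane. -/
noncomputable def v2 (a b : ℝ) : E2 := (WithLp.equiv 2 (Fin 2 → ℝ)).symm ![a, b]

/-- The reflection `s(x, y) = (x, −y)`. -/
noncomputable def sRef (X : E2) : E2 := v2 (X 0) (-(X 1))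

/-- Action of a `2×2` matrix on the Euclidean plane. -/
noncomputable def act (M : Matrix (Fin 2) (Fin 2) ℝ) (v : E2) : E2 := (WithLp.equiv 2 (Fin 2 → ℝ)).symm (M.mulVec v)

/- Auxiliary lemmas -/

lemma v2_apply0 (a b : ℝ) : (v2 a b) 0 = a := rfl
lemma v2_apply1 (a b : ℝ) : (v2 a b) 1 = b := rfl
lemma v2_eta (u : E2) : v2 (u 0) (u 1) = u := by ext i; fin_cases i <;> rfl
lemma v2_add (a b c d : ℝ) : v2 a b + v2 c d = v2 (a+c) (b+d) := by
  ext i; fin_cases i <;> rfl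
lemma v2_smul (c a b : ℝ) : c • v2 a b = v2 (c*a) (c*b) := by
  ext i; fin_cases i <;> rfl
lemma v2_ne_zero {a b : ℝ} (ha : a ≠ 0) : v2 a b ≠ 0 := by
  intro h; exact ha (by rw [← v2_apply0 a b, h]; rfl)
lemma v2_ne_zero' {a b : ℝ} (hb : b ≠ 0) : v2 a b ≠ 0 := by
  intro h; exact hb (by rw [← v2_apply1 a b, h]; rfl)
lemma v2_inner (a b c d : ℝ) : (inner ℝ (v2 a b) (v2 c d) : ℝ) = a*c + b*d := by
  simp [PiLp.inner_apply, v2, Fin.sum_univ_two]; ring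
lemma v2_zero : v2 0 0 = 0 := by ext i; fin_cases i <;> rfl
lemma v2_norm (a b : ℝ) : ‖v2 a b‖ = Real.sqrt (a^2 + b^2) := by
  simp [v2, EuclideanSpace.norm_eq, Fin.sum_univ_two, sq_abs]

lemma sRef_v2 (a b : ℝ) : sRef (v2 a b) = v2 a (-b) := rfl

/-- `sRef` as a continuous linear map. -/
noncomputable def sL : E2 →L[ℝ] E2 :=
  LinearMap.toContinuousLinearMap
  { toFun := sRef
    map_add' := by intro x y; ext i; fin_cases i <;> simp [sRef, v2, add_comm]
    map_smul' := by intro c x; ext i; fin_cases i <;> simp [sRef, v2] }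

lemma sL_eq (X : E2) : sL X = sRef X := rfl

/-- `act M` as a continuous linear map. -/
noncomputable def actL (M : Matrix (Fin 2) (Fin 2) ℝ) : E2 →L[ℝ] E2 :=
  LinearMap.toContinuousLinearMap
  { toFun := act M
    map_add' := by intro x y; ext i; fin_cases i <;> simp [act, Matrix.mulVec, dotProduct, Fin.sum_univ_two] <;> ring
    map_smul' := by
      intro c x
      ext i; fin_cases i <;> simp [act, Matrix.mulVec, dotProduct, Fin.sum_univ_two] <;> ring }

lemma actL_eq (M : Matrix (Fin 2) (Fin 2) ℝ) (v : E2) : actL M v = act M v := rfl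

/-- let `Y` be the (analytic) support function of a compact strictly convex
body `K` with `0` in its interior (whose boundary is the curve `γ`), let
`P(X) = dY(X)(s(X))`, and for `L ∈ GL₂(ℝ)` set `g_L(δ) = P(L(1,δ))`. Then `g_L` is real
analytic and is not equal to any polynomial. -/
theorem stmt16
    (K : Set E2) (hK : IsCompact K) (hsc : StrictConvex ℝ K)
    (h0 : (0 : E2) ∈ interior K)
    (Y : E2 → ℝ)
    (han : AnalyticOn ℝ Y {X : E2 | X ≠ 0})
    (hsupp : ∀ ξ : E2, IsLUB ((fun y => (inner ℝ ξ y : ℝ)) '' K) (Y ξ))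
    (L : Matrix (Fin 2) (Fin 2) ℝ) (hL : IsUnit L.det)
    (g : ℝ → ℝ)
    (hg : ∀ δ : ℝ, g δ = fderiv ℝ Y (act L (v2 1 δ)) (sRef (act L (v2 1 δ)))) :
    AnalyticOn ℝ g Set.univ ∧ ¬∃ p : Polynomial ℝ, ∀ δ : ℝ, g δ = p.eval δ := by
  classical
  have hdet : L.det ≠ 0 := by simpa [isUnit_iff_ne_zero] using hL
  set F : E2 → ℝ := fun X => fderiv ℝ Y X (sRef X) with hFdef
  set S : Set E2 := {X : E2 | X ≠ 0} with hSdef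
  have hS : IsOpen S := isOpen_ne
  have hanN : AnalyticOnNhd ℝ Y S := (hS.analyticOn_iff_analyticOnNhd).mp han
  -- F is analytic away from 0
  have hFan : AnalyticOnNhd ℝ F S := by
    intro x hx
    have h1 : AnalyticAt ℝ (fderiv ℝ Y) x := (hanN.fderiv) x hx
    have h2 : AnalyticAt ℝ (fun X : E2 => sRef X) x := by
      have := (sL : E2 →L[ℝ] E2).analyticAt x
      exact this
    have h3 := ((ContinuousLinearMap.id ℝ (E2 →L[ℝ] ℝ)).analyticAt_bilinear
      (fderiv ℝ Y x, sRef x)).comp₂ h1 h2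
    simpa using h3
  -- the linear curves
  set A : ℝ → ℝ → E2 := fun x y => act L (v2 x y) with hAdef
  have hAsmul : ∀ c x y : ℝ, c • A x y = A (c*x) (c*y) := by
    intro c x y
    rw [hAdef]
    simp only [← actL_eq]
    rw [← v2_smul, _root_.map_smul]
  have hAadd : ∀ x y x' y' : ℝ, A x y + A x' y' = A (x+x') (y+y') := by
    intro x y x' y'
    rw [hAdef]
    simp only [← actL_eq]
    rw [← v2_add, map_add]
  have hAne : ∀ x y : ℝ, (x ≠ 0 ∨ y ≠ 0) → A x y ≠ 0 := by
    intro x y hxy h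
    have hv : v2 x y = 0 := by
      have h' : L *ᵥ (v2 x y).ofLp = 0 := congrArg WithLp.ofLp h
      exact congrArg (WithLp.toLp 2) (Matrix.eq_zero_of_mulVec_eq_zero hdet h')
    rcases hxy with hx | hy
    · exact v2_ne_zero hx hv
    · exact v2_ne_zero' hy hv
  -- analyticity of the general affine probe
  have hgen : ∀ a b c d : ℝ, (∀ t : ℝ, a + t*b ≠ 0 ∨ c + t*d ≠ 0) →
      AnalyticOnNhd ℝ (fun t => F (A (a+t*b) (c+t*d))) Set.univ := by
    intro a b c d hne
    have hκ : AnalyticOnNhd ℝ (fun t : ℝ => A (a+t*b) (c+t*d)) Set.univ := by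
      have : (fun t : ℝ => A (a+t*b) (c+t*d)) = fun t : ℝ => A a c + t • A b d := by
        funext t
        rw [hAsmul, hAadd]
      rw [this]
      intro t _
      exact analyticAt_const.add ((analyticAt_id).smul analyticAt_const)
    exact hFan.comp hκ (fun t _ => hAne _ _ (hne t))
  -- analyticity of g
  have hgan : AnalyticOnNhd ℝ g Set.univ := by
    have h1 := hgen 1 0 0 1 (fun t => Or.inl (by norm_num))
    have h2 : g = fun t : ℝ => F (A (1+t*0) (0+t*1)) := by
      funext t
      rw [hg t]
      norm_num
      rfl
    rw [h2]
    exact h1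
  refine ⟨hgan.analyticOn, ?_⟩
  rintro ⟨p, hp⟩
  -- homogeneity of Y
  have hhom : ∀ c : ℝ, 0 < c → ∀ ξ : E2, Y (c • ξ) = c * Y ξ := by
    intro c hc ξ
    have h1 := hsupp ξ
    have h2 := hsupp (c • ξ)
    have himg : ((fun y => (inner ℝ (c • ξ) y : ℝ)) '' K)
        = (fun t => c * t) '' ((fun y => (inner ℝ ξ y : ℝ)) '' K) := by
      have hfun : (fun y : E2 => (inner ℝ (c • ξ) y : ℝ)) = fun y => c * (inner ℝ ξ y : ℝ) := by
        funext y
        exact real_inner_smul_left ξ y c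
      rw [hfun, Set.image_image]
    have hlub : IsLUB ((fun t => c * t) '' ((fun y => (inner ℝ ξ y : ℝ)) '' K)) (c * Y ξ) := by
      constructor
      · rintro _ ⟨t, ht, rfl⟩
        exact mul_le_mul_of_nonneg_left (h1.1 ht) hc.le
      · intro b hb
        have : Y ξ ≤ b / c := by
          apply h1.2
          intro t ht
          have := hb (Set.mem_image_of_mem _ ht)
          rw [le_div_iff₀ hc]
          linarith
        calc c * Y ξ ≤ c * (b / c) := by
              exact mul_le_mul_of_nonneg_left this hc.le
          _ = b := by field_simp
    rw [himg] at h2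
    exact h2.unique hlub
  have hdiff : ∀ X : E2, X ≠ 0 → DifferentiableAt ℝ Y X :=
    fun X hX => (hanN X hX).differentiableAt
  -- Euler's relation
  have hEuler : ∀ X : E2, X ≠ 0 → fderiv ℝ Y X X = Y X := by
    intro X hX
    have h1 : HasDerivAt (fun t : ℝ => t • X) X 1 := by
      simpa using (hasDerivAt_id (1:ℝ)).smul_const X
    have h2 : HasFDerivAt Y (fderiv ℝ Y X) ((1:ℝ) • X) := by
      simpa using (hdiff X hX).hasFDerivAt
    have hd : HasDerivAt (fun t : ℝ => Y (t • X)) (fderiv ℝ Y X X) 1 := by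
      exact (h2.comp_hasDerivAt 1 h1)
    have he : (fun t : ℝ => Y (t • X)) =ᶠ[nhds 1] fun t => t * Y X := by
      filter_upwards [Ioi_mem_nhds (zero_lt_one)] with t ht
      exact hhom t ht X
    have hd2 : HasDerivAt (fun t : ℝ => Y (t • X)) (Y X) 1 := by
      have : HasDerivAt (fun t : ℝ => t * Y X) (Y X) 1 := by
        simpa using (hasDerivAt_id (1:ℝ)).mul_const (Y X)
      exact this.congr_of_eventuallyEq he
    exact hd.unique hd2
  -- homogeneity of the derivative
  have hfdhom : ∀ c : ℝ, 0 < c → ∀ X : E2, X ≠ 0 →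
      fderiv ℝ Y (c • X) = fderiv ℝ Y X := by
    intro c hc X hX
    have hcX : c • X ≠ 0 := smul_ne_zero hc.ne' hX
    have hs : HasFDerivAt (fun x : E2 => c • x) (c • ContinuousLinearMap.id ℝ E2) X := by
      have := (c • ContinuousLinearMap.id ℝ E2).hasFDerivAt (x := X)
      exact this
    have h1 : HasFDerivAt (fun x : E2 => Y (c • x)) (c • fderiv ℝ Y (c • X)) X := by
      have h := ((hdiff _ hcX).hasFDerivAt).comp X hs
      have heq : (fderiv ℝ Y (c • X)).comp (c • ContinuousLinearMap.id ℝ E2)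
          = c • fderiv ℝ Y (c • X) := by
        ext x
        simp
      rwa [heq] at h
    have h2 : HasFDerivAt (fun x : E2 => Y (c • x)) (c • fderiv ℝ Y X) X := by
      have heq : (fun x : E2 => Y (c • x)) = fun x => c * Y x :=
        funext fun x => hhom c hc x
      rw [heq]
      exact ((hdiff X hX).hasFDerivAt).const_mul c
    have := h1.unique h2
    exact smul_right_injective (E2 →L[ℝ] ℝ) hc.ne' this
  -- homogeneity of F
  have hFhom : ∀ c : ℝ, 0 < c → ∀ X : E2, X ≠ 0 → F (c • X) = c * F X := by
    intro c hc X hX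
    have hsR : sRef (c • X) = c • sRef X := by
      rw [← sL_eq, ← sL_eq]
      exact sL.map_smul c X
    rw [hFdef]
    simp only
    rw [hsR, hfdhom c hc X hX, (fderiv ℝ Y X).map_smul]
    simp
  -- the two analytic probes
  set hP : ℝ → ℝ := fun t => F (A t 1) with hPdef
  set hM : ℝ → ℝ := fun t => F (A t (-1)) with hMdef
  have hPan : AnalyticOnNhd ℝ hP Set.univ := by
    have h1 := hgen 0 1 1 0 (fun t => Or.inr (by norm_num))
    have h2 : hP = fun t : ℝ => F (A (0+t*1) (1+t*0)) := by
      funext t; rw [hPdef]; norm_num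
    rw [h2]; exact h1
  have hMan : AnalyticOnNhd ℝ hM Set.univ := by
    have h1 := hgen 0 1 (-1) 0 (fun t => Or.inr (by norm_num))
    have h2 : hM = fun t : ℝ => F (A (0+t*1) (-1+t*0)) := by
      funext t; rw [hMdef]; norm_num
    rw [h2]; exact h1
  have hgF : ∀ δ : ℝ, g δ = F (A 1 δ) := fun δ => hg δ
  -- scaling identities
  have keyP : ∀ t : ℝ, 0 < t → hP t = t * g (1/t) := by
    intro t ht
    have h1 : A 1 (1/t) = (1/t) • A t 1 := by
      rw [hAsmul]
      congr 1 <;> field_simp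
    have h2 : g (1/t) = (1/t) * hP t := by
      rw [hgF, h1, hFhom (1/t) (by positivity) _ (hAne t 1 (Or.inr one_ne_zero))]
    rw [h2]
    field_simp
  have keyM : ∀ t : ℝ, 0 < t → hM t = t * g (-(1/t)) := by
    intro t ht
    have h1 : A 1 (-(1/t)) = (1/t) • A t (-1) := by
      rw [hAsmul]
      congr 1 <;> field_simp
    have h2 : g (-(1/t)) = (1/t) * hM t := by
      rw [hgF, h1, hFhom (1/t) (by positivity) _ (hAne t (-1) (Or.inr (by norm_num)))]
    rw [h2]
    field_simp
  -- the polynomial is (at most) linear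
  set c : ℝ := hP 0 with hcdef
  have hcont : ContinuousAt hP 0 := (hPan 0 trivial).continuousAt
  have htend : Filter.Tendsto (fun δ : ℝ => p.eval δ / δ) Filter.atTop (nhds c) := by
    have h1 : Filter.Tendsto (fun δ : ℝ => 1/δ) Filter.atTop (nhds 0) := by
      simpa [one_div] using tendsto_inv_atTop_zero (𝕜 := ℝ)
    have h2 : Filter.Tendsto (fun δ : ℝ => hP (1/δ)) Filter.atTop (nhds c) :=
      (hcont.tendsto).comp h1
    apply h2.congr'
    filter_upwards [Filter.eventually_gt_atTop (0:ℝ)] with δ hδ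
    have h3 := keyP (1/δ) (by positivity)
    rw [one_div_one_div] at h3
    rw [h3, ← hp δ]
    field_simp
  set r : Polynomial ℝ := p - Polynomial.C c * Polynomial.X with hrdef
  have hrt : Filter.Tendsto (fun x : ℝ => r.eval x / (Polynomial.X : Polynomial ℝ).eval x)
      Filter.atTop (nhds 0) := by
    have h1 : Filter.Tendsto (fun x : ℝ => p.eval x / x - c) Filter.atTop (nhds (c - c)) :=
      htend.sub tendsto_const_nhds
    rw [sub_self] at h1
    apply h1.congr'
    filter_upwards [Filter.eventually_gt_atTop (0:ℝ)] with x hx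
    rw [hrdef]
    simp only [Polynomial.eval_sub, Polynomial.eval_mul, Polynomial.eval_C, Polynomial.eval_X]
    field_simp
  have hdeg : r.degree < 1 := by
    have := (Polynomial.div_tendsto_zero_iff_degree_lt r Polynomial.X
      Polynomial.X_ne_zero).mp hrt
    rwa [Polynomial.degree_X] at this
  set d : ℝ := r.coeff 0 with hddef
  have hrC : r = Polynomial.C d :=
    Polynomial.eq_C_of_degree_le_zero (Nat.WithBot.lt_one_iff_le_zero.mp hdeg)
  have hpev : ∀ x : ℝ, p.eval x = c * x + d := by
    intro x
    have : p = Polynomial.C c * Polynomial.X + Polynomial.C d := by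
      rw [← hrC, hrdef]; ring
    rw [this]
    simp
  have hgev : ∀ x : ℝ, g x = c * x + d := fun x => by rw [hp x, hpev x]
  -- extend the formulas by analytic continuation
  have hlin : AnalyticOnNhd ℝ (fun t : ℝ => c + d * t) Set.univ := by
    intro t _
    exact analyticAt_const.add (analyticAt_const.mul analyticAt_id)
  have hlin' : AnalyticOnNhd ℝ (fun t : ℝ => -c + d * t) Set.univ := by
    intro t _
    exact analyticAt_const.add (analyticAt_const.mul analyticAt_id)
  have hPeq : ∀ t : ℝ, hP t = c + d * t := by
    have heq : Set.EqOn hP (fun t => c + d * t) Set.univ := by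
      apply hPan.eqOn_of_preconnected_of_eventuallyEq hlin isPreconnected_univ
        (Set.mem_univ (1:ℝ))
      filter_upwards [Ioi_mem_nhds (zero_lt_one)] with t ht
      have ht0 : t ≠ 0 := ne_of_gt ht
      rw [keyP t ht, hgev (1/t)]
      field_simp
    exact fun t => heq (Set.mem_univ t)
  have hMeq : ∀ t : ℝ, hM t = -c + d * t := by
    have heq : Set.EqOn hM (fun t => -c + d * t) Set.univ := by
      apply hMan.eqOn_of_preconnected_of_eventuallyEq hlin' isPreconnected_univ
        (Set.mem_univ (1:ℝ))
      filter_upwards [Ioi_mem_nhds (zero_lt_one)] with t ht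
      have ht0 : t ≠ 0 := ne_of_gt ht
      rw [keyM t ht, hgev (-(1/t))]
      field_simp
    exact fun t => heq (Set.mem_univ t)
  -- the formula for F on the (transformed) half-planes
  have hform : ∀ x y : ℝ, y ≠ 0 → F (A x y) = d * x + c * y := by
    intro x y hy
    rcases hy.lt_or_gt with hneg | hpos
    · have h1 : A x y = (-y) • A (x/(-y)) (-1) := by
        rw [hAsmul]
        congr 1 <;> field_simp
      rw [h1, hFhom (-y) (by linarith) _ (hAne _ _ (Or.inr (by norm_num)))]
      have h2 : F (A (x / -y) (-1)) = -c + d * (x / -y) := hMeq _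
      rw [h2]
      field_simp [hy]
      ring
    · have h1 : A x y = y • A (x/y) 1 := by
        rw [hAsmul]
        congr 1 <;> field_simp
      rw [h1, hFhom y hpos _ (hAne _ _ (Or.inr one_ne_zero))]
      have h2 : F (A (x / y) 1) = c + d * (x / y) := hPeq _
      rw [h2]
      field_simp [hy]
      ring
  -- extend to the x-axis by continuity
  have hlim : ∀ x y : ℝ, (x ≠ 0 ∨ y ≠ 0) → F (A x y) = d * x + c * y := by
    intro x y hxy
    by_cases hy : y ≠ 0
    · exact hform x y hy
    push_neg at hy
    subst hy
    have hx : x ≠ 0 := by tauto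
    have hne : A x 0 ≠ 0 := hAne x 0 (Or.inl hx)
    have hcF : ContinuousAt F (A x 0) := (hFan _ hne).continuousAt
    have hψ : Filter.Tendsto (fun t : ℝ => A x t) (nhdsWithin 0 (Set.Ioi 0))
        (nhds (A x 0)) := by
      have hco : Continuous (fun t : ℝ => A x 0 + t • A 0 1) :=
        continuous_const.add (continuous_id.smul continuous_const)
      have heq : (fun t : ℝ => A x t) = fun t : ℝ => A x 0 + t • A 0 1 := by
        funext t
        rw [hAsmul, hAadd]
        norm_num
      rw [heq]
      have h5 : Filter.Tendsto (fun t : ℝ => A x 0 + t • A 0 1) (nhdsWithin 0 (Set.Ioi 0))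
          (nhds (A x 0 + (0:ℝ) • A 0 1)) :=
        ((hco.tendsto 0).mono_left (nhdsWithin_le_nhds (s := Set.Ioi 0)))
      simpa using h5
    have T1 : Filter.Tendsto (fun t : ℝ => F (A x t)) (nhdsWithin 0 (Set.Ioi 0))
        (nhds (F (A x 0))) := hcF.tendsto.comp hψ
    have T2 : Filter.Tendsto (fun t : ℝ => F (A x t)) (nhdsWithin 0 (Set.Ioi 0))
        (nhds (d * x + c * 0)) := by
      have hco : Filter.Tendsto (fun t : ℝ => d * x + c * t) (nhdsWithin 0 (Set.Ioi 0))
          (nhds (d * x + c * 0)) := by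
        have hcont2 : Continuous (fun t : ℝ => d * x + c * t) := continuous_const.add (continuous_const.mul continuous_id)
        have h6 : Filter.Tendsto (fun t : ℝ => d * x + c * t) (nhdsWithin 0 (Set.Ioi 0))
            (nhds (d * x + c * 0)) := by
          have h7 := (hcont2.tendsto 0).mono_left (nhdsWithin_le_nhds (s := Set.Ioi 0))
          simpa using h7
        exact h6
      apply hco.congr'
      filter_upwards [self_mem_nhdsWithin] with t ht
      exact (hform x t (ne_of_gt ht)).symm
    have := tendsto_nhds_unique T1 T2
    simpa using this
  -- evaluate at e₁ and -e₁
  set e₁ : E2 := v2 1 0 with he₁def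
  have he₁ne : e₁ ≠ 0 := v2_ne_zero one_ne_zero
  set u : E2 := (WithLp.equiv 2 (Fin 2 → ℝ)).symm ((L⁻¹).mulVec e₁) with hudef
  have hu : A (u 0) (u 1) = e₁ := by
    rw [hAdef]
    simp only
    rw [v2_eta, hudef, act]
    show (WithLp.equiv 2 (Fin 2 → ℝ)).symm (L *ᵥ (L⁻¹ *ᵥ e₁.ofLp)) = e₁
    rw [Matrix.mulVec_mulVec, Matrix.mul_nonsing_inv L hL, Matrix.one_mulVec]
    rfl
  have hune : u 0 ≠ 0 ∨ u 1 ≠ 0 := by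
    by_contra hcon
    push_neg at hcon
    obtain ⟨h1, h2⟩ := hcon
    rw [h1, h2] at hu
    apply he₁ne
    rw [← hu, hAdef]
    simp only
    rw [v2_zero, act]
    show (WithLp.equiv 2 (Fin 2 → ℝ)).symm (L *ᵥ 0) = 0
    rw [Matrix.mulVec_zero]
    rfl
  have hmu : A (-(u 0)) (-(u 1)) = -e₁ := by
    have := hAsmul (-1) (u 0) (u 1)
    rw [hu] at this
    simpa using this.symm
  have hFe1 : F e₁ = d * u 0 + c * u 1 := by
    rw [← hu]
    exact hlim _ _ hune
  have hFme1 : F (-e₁) = -(d * u 0 + c * u 1) := by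
    have huneg : -(u 0) ≠ 0 ∨ -(u 1) ≠ 0 := by
      rcases hune with h | h
      · exact Or.inl (by simpa using h)
      · exact Or.inr (by simpa using h)
    rw [← hmu, hlim _ _ huneg]
    ring
  -- Euler's relation at ±e₁
  have hse : sRef e₁ = e₁ := by
    rw [he₁def, sRef_v2]
    norm_num
  have hsme : sRef (-e₁) = -e₁ := by
    have h1 : -e₁ = v2 (-1) 0 := by
      ext i
      fin_cases i <;> simp [he₁def, v2]
    rw [h1, sRef_v2]
    norm_num
  have hFeY : F e₁ = Y e₁ := by
    rw [hFdef]
    simp only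
    rw [hse]
    exact hEuler e₁ he₁ne
  have hFmeY : F (-e₁) = Y (-e₁) := by
    rw [hFdef]
    simp only
    rw [hsme]
    exact hEuler (-e₁) (neg_ne_zero.mpr he₁ne)
  -- positivity of the support function at ±e₁
  obtain ⟨ρ, hρ, hball⟩ := Metric.isOpen_iff.mp isOpen_interior 0 h0
  have hballK : Metric.ball (0:E2) ρ ⊆ K := hball.trans interior_subset
  have hpos : ∀ ξ : E2, ‖ξ‖ = 1 → 0 < Y ξ := by
    intro ξ hξ
    have hmem : (ρ/2) • ξ ∈ K := by
      apply hballK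
      rw [Metric.mem_ball, dist_zero_right, norm_smul, hξ]
      simp only [mul_one]
      rw [Real.norm_eq_abs, abs_of_pos (by linarith)]
      linarith
    have hle : (inner ℝ ξ ((ρ/2) • ξ) : ℝ) ≤ Y ξ :=
      (hsupp ξ).1 (Set.mem_image_of_mem _ hmem)
    rw [real_inner_smul_right, real_inner_self_eq_norm_sq, hξ] at hle
    norm_num at hle
    linarith
  have hne1 : ‖e₁‖ = 1 := by
    rw [he₁def, v2_norm]
    norm_num
  have hnme1 : ‖-e₁‖ = 1 := by rw [norm_neg]; exact hne1
  have hY1 : 0 < Y e₁ := hpos e₁ hne1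
  have hY2 : 0 < Y (-e₁) := hpos (-e₁) hnme1
  have : Y e₁ + Y (-e₁) = 0 := by
    rw [← hFeY, ← hFmeY, hFe1, hFme1]
    ring
  linarith
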